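/- Let Φ be a symmetric bilinear form on ℝⁿ and x ∈ ℝⁿ with Φ(x,x) > 0. Suppose the restriction of Φ to every 2-dimensional subspace containing x has signature (+,−) or (+,0) (i.e. is not positive definite). Then Φ has exactly one positive eigenvalue, and it is simple. -/

import Mathlib

/-!
Expanding in an orthonormal eigenbasis, `Φ(x, x) = ∑ λᵢ ⟨eᵢ, x⟩²`, so `Φ(x, x) > 0` forces a
positive eigenvalue. If there were two, `λᵢ` and `λⱼ`, the form would be positive definite on
`span {eᵢ, eⱼ}`; this plane meets the `Φ`-orthogonal hyperplane of `x` in some `v ≠ 0`, and then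
`Φ(s x + t v, s x + t v) = s² Φ(x, x) + t² Φ(v, v)` is positive definite on the plane
`span {x, v}` through `x`, contradicting the hypothesis.
-/

open Matrix

namespace LinearMap.BilinForm

lemma IsSymm.apply_smul_add_smul_self {R M : Type*} [CommRing R] [AddCommGroup M] [Module R M]
    {B : LinearMap.BilinForm R M} {x v : M} (hB : B.IsSymm) (h : B x v = 0) (s t : R) :
    B (s • x + t • v) (s • x + t • v) = s ^ 2 * B x x + t ^ 2 * B v v := by
  have hvx : B v x = 0 := by rw [hB.eq, h]
  simp only [map_add, map_smul, LinearMap.add_apply, LinearMap.smul_apply, smul_eq_mul, h, hvx]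
  ring

variable {K V : Type*} [Field K] [LinearOrder K] [IsStrictOrderedRing K]
  [AddCommGroup V] [Module K V] {B : LinearMap.BilinForm K V} {x v : V}

lemma linearIndependent_pair_of_apply_eq_zero (h : B x v = 0) (hx : 0 < B x x) (hv : v ≠ 0) :
    LinearIndependent K ![x, v] := by
  refine LinearIndependent.pair_iff.mpr fun s t hst => ?_
  have hs : s * B x x = 0 := by
    simpa [h] using congrArg (B x) hst
  obtain rfl : s = 0 := (mul_eq_zero.mp hs).resolve_right hx.ne'
  exact ⟨rfl, (smul_eq_zero.mp (by simpa using hst)).resolve_right hv⟩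

lemma IsSymm.pos_of_mem_span_pair (hB : B.IsSymm) (h : B x v = 0) (hx : 0 < B x x)
    (hv : 0 < B v v) {y : V} (hy : y ∈ Submodule.span K {x, v}) (hy0 : y ≠ 0) : 0 < B y y := by
  obtain ⟨s, t, rfl⟩ := Submodule.mem_span_pair.mp hy
  rw [hB.apply_smul_add_smul_self h]
  rcases eq_or_ne s 0 with rfl | hs
  · have ht : t ≠ 0 := by rintro rfl; simp at hy0
    nlinarith [sq_pos_of_ne_zero ht]
  · nlinarith [sq_pos_of_ne_zero hs, sq_nonneg t]

lemma IsSymm.exists_apply_eq_zero_pos {u w : V} (hB : B.IsSymm) (hu : 0 < B u u) (hw : 0 < B w w)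
    (huw : B u w = 0) (x : V) : ∃ v, B x v = 0 ∧ 0 < B v v := by
  by_cases hxu : B x u = 0
  · exact ⟨u, hxu, hu⟩
  refine ⟨B x w • u + (-B x u) • w, ?_, ?_⟩
  · simp only [map_add, map_smul, smul_eq_mul]
    ring
  · rw [hB.apply_smul_add_smul_self huw]
    nlinarith [sq_pos_of_ne_zero (neg_ne_zero.mpr hxu), sq_nonneg (B x w)]

lemma IsSymm.exists_finrank_eq_two_forall_pos {u w : V} (hB : B.IsSymm) (hx : 0 < B x x)
    (hu : 0 < B u u) (hw : 0 < B w w) (huw : B u w = 0) :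
    ∃ L : Submodule K V, x ∈ L ∧ Module.finrank K L = 2 ∧ ∀ y ∈ L, y ≠ 0 → 0 < B y y := by
  obtain ⟨v, hxv, hv⟩ := hB.exists_apply_eq_zero_pos hu hw huw x
  have hv0 : v ≠ 0 := by rintro rfl; simp at hv
  refine ⟨Submodule.span K {x, v}, Submodule.subset_span (by simp), ?_,
    fun y hy hy0 => hB.pos_of_mem_span_pair hxv hx hv hy hy0⟩
  rw [← Matrix.range_cons_cons_empty x v ![],
    finrank_span_eq_card (linearIndependent_pair_of_apply_eq_zero hxv hx hv0), Fintype.card_fin]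

end LinearMap.BilinForm

namespace Matrix.IsHermitian

variable {n : Type*} [Fintype n] [DecidableEq n] {A : Matrix n n ℝ}

lemma dotProduct_mulVec_self_eq_sum (hA : A.IsHermitian) (x : n → ℝ) :
    x ⬝ᵥ A *ᵥ x = ∑ i, hA.eigenvalues i * (⇑(hA.eigenvectorBasis i) ⬝ᵥ x) ^ 2 := by
  have hUx : ∀ i, ((hA.eigenvectorUnitary : Matrix n n ℝ)ᵀ *ᵥ x) i =
      ⇑(hA.eigenvectorBasis i) ⬝ᵥ x := fun i => rfl
  conv_lhs => rw [hA.spectral_theorem, Unitary.conjStarAlgAut_apply]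
  rw [star_eq_conjTranspose, conjTranspose_eq_transpose_of_trivial, ← mulVec_mulVec,
    ← mulVec_mulVec, dotProduct_mulVec, ← mulVec_transpose]
  simp only [dotProduct, mulVec_diagonal, hUx]
  refine Finset.sum_congr rfl fun i _ => ?_
  simp only [RCLike.ofReal_real_eq_id, Function.comp_apply, id_eq]
  ring

lemma eigenvectorBasis_dotProduct_mulVec (hA : A.IsHermitian) (i j : n) :
    ⇑(hA.eigenvectorBasis i) ⬝ᵥ A *ᵥ ⇑(hA.eigenvectorBasis j) =
      if i = j then hA.eigenvalues i else 0 := by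
  have h : ⇑(hA.eigenvectorBasis i) ⬝ᵥ ⇑(hA.eigenvectorBasis j) = if i = j then 1 else 0 := by
    simpa [EuclideanSpace.inner_eq_star_dotProduct, eq_comm] using
      orthonormal_iff_ite.mp hA.eigenvectorBasis.orthonormal j i
  rw [mulVec_eigenvectorBasis, dotProduct_smul, h, smul_eq_mul, mul_ite, mul_one, mul_zero]
  split_ifs with hij <;> simp only [hij]

lemma exists_eigenvalues_pos (hA : A.IsHermitian) {x : n → ℝ} (hx : 0 < x ⬝ᵥ A *ᵥ x) :
    ∃ i, 0 < hA.eigenvalues i := by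
  by_contra! h
  rw [hA.dotProduct_mulVec_self_eq_sum] at hx
  exact hx.not_ge <| Finset.sum_nonpos fun i _ => mul_nonpos_of_nonpos_of_nonneg (h i) (sq_nonneg _)

end Matrix.IsHermitian

theorem stmt_4 (n : ℕ) (A : Matrix (Fin n) (Fin n) ℝ) (hA : A.IsHermitian)
    (x : Fin n → ℝ) (hx : 0 < x ⬝ᵥ A.mulVec x)
    (h2 : ∀ L : Submodule ℝ (Fin n → ℝ), x ∈ L → Module.finrank ℝ L = 2 →
      ∃ y ∈ L, y ≠ 0 ∧ y ⬝ᵥ A.mulVec y ≤ 0) :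
    (Finset.univ.filter fun i => 0 < hA.eigenvalues i).card = 1 := by
  have hB : A.toBilin'.IsSymm := isSymm_toBilin'_iff_isSymm.mpr (isHermitian_iff_isSymm.mp hA)
  have heigen := hA.eigenvectorBasis_dotProduct_mulVec
  obtain ⟨i, hi⟩ := hA.exists_eigenvalues_pos hx
  refine Finset.card_eq_one.mpr ⟨i, Finset.eq_singleton_iff_unique_mem.mpr
    ⟨Finset.mem_filter.mpr ⟨Finset.mem_univ i, hi⟩, fun j hj => ?_⟩⟩
  have hj' := (Finset.mem_filter.mp hj).2
  by_contra hji
  obtain ⟨L, hxL, hL, hpos⟩ := hB.exists_finrank_eq_two_forall_pos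
    (u := ⇑(hA.eigenvectorBasis i)) (w := ⇑(hA.eigenvectorBasis j))
    (by rwa [toBilin'_apply']) (by simpa [toBilin'_apply', heigen] using hi)
    (by simpa [toBilin'_apply', heigen] using hj')
    (by simp [toBilin'_apply', heigen, Ne.symm hji])
  obtain ⟨y, hyL, hy0, hy⟩ := h2 L hxL hL
  exact (hpos y hyL hy0).not_ge (by rwa [toBilin'_apply'])
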